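/- Let T ⊂ ℝ² be the triangle given by the convex hull of three affinely independent points v₁, v₂, v₃ (so T does not degenerate to a line), with area A = μ(T) and centroid c = (c₁, c₂), and second-order central moments I^xx, I^xy, I^yy of T about c. Then the 3×3 matrix W = [[A, 0, 0], [A·c₁, I^xx, I^xy], [A·c₂, I^xy, I^yy]] satisfies det W = A·(I^xx·I^yy − (I^xy)²) > 0; in particular W is invertible and for every f ∈ ℝ³ the linear system W·d = f has a unique solution d ∈ ℝ³. -/

import Mathlib

/-!
The quadratic form `u ↦ ∫_T (u ⬝ (x - c))²` of the second-moment matrix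
`[[Ixx, Ixy], [Ixy, Iyy]]` is positive definite, because a nonzero affine function vanishes only
on a line, which is Lebesgue-null, while a nondegenerate triangle has positive area. Hence that
matrix has positive determinant, and `W` is block lower triangular with diagonal blocks `A` and
this matrix.
-/

open MeasureTheory Matrix

section SecondMoment

variable {ι : Type*} [Fintype ι]

noncomputable def secondMomentMatrix (μ : Measure (ι → ℝ)) (s : Set (ι → ℝ)) (c : ι → ℝ) :
    Matrix ι ι ℝ :=
  Matrix.of fun i j => ∫ x in s, (x i - c i) * (x j - c j) ∂μ

theorem measure_dotProduct_sub_eq_zero (μ : Measure (ι → ℝ)) [μ.IsAddHaarMeasure]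
    {u : ι → ℝ} (hu : u ≠ 0) (c : ι → ℝ) :
    μ {x | u ⬝ᵥ (x - c) = 0} = 0 := by
  have hker : LinearMap.ker (dotProductBilin ℝ ℝ u) ≠ ⊤ := fun h =>
    hu (dotProduct_self_eq_zero.mp (LinearMap.congr_fun (LinearMap.ker_eq_top.mp h) u))
  have hset : {x | u ⬝ᵥ (x - c) = 0} =
      (· + -c) ⁻¹' (LinearMap.ker (dotProductBilin ℝ ℝ u) : Set (ι → ℝ)) := by
    ext x; simp [sub_eq_add_neg]
  rw [hset, measure_preimage_add_right]
  exact Measure.addHaar_submodule μ _ hker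

theorem setIntegral_sq_pos {X : Type*} [MeasurableSpace X] {μ : Measure X} {s : Set X}
    {f : X → ℝ} (hf : IntegrableOn (fun x => f x ^ 2) s μ) (hzero : μ {x | f x = 0} = 0)
    (hs : 0 < μ s) : 0 < ∫ x in s, f x ^ 2 ∂μ := by
  rw [setIntegral_pos_iff_support_of_nonneg_ae (.of_forall fun x => sq_nonneg (f x)) hf]
  calc 0 < μ s := hs
    _ = μ (s \ {x | f x = 0}) := (measure_sdiff_null hzero).symm
    _ ≤ μ (Function.support (fun x => f x ^ 2) ∩ s) :=
      measure_mono fun x ⟨hxs, hx⟩ => ⟨pow_ne_zero 2 hx, hxs⟩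

theorem dotProduct_secondMomentMatrix_mulVec (μ : Measure (ι → ℝ))
    [IsFiniteMeasureOnCompacts μ] {s : Set (ι → ℝ)} (hs : IsCompact s) (c u : ι → ℝ) :
    u ⬝ᵥ (secondMomentMatrix μ s c *ᵥ u) = ∫ x in s, (u ⬝ᵥ (x - c)) ^ 2 ∂μ := by
  have hint : ∀ i j,
      IntegrableOn (fun x : ι → ℝ => u i * u j * ((x i - c i) * (x j - c j))) s μ :=
    fun i j => (by fun_prop : Continuous _).continuousOn.integrableOn_compact hs
  calc u ⬝ᵥ (secondMomentMatrix μ s c *ᵥ u)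
      = ∑ i, ∑ j, ∫ x in s, u i * u j * ((x i - c i) * (x j - c j)) ∂μ := by
        refine Finset.sum_congr rfl fun i _ => ?_
        simp only [mulVec, dotProduct, Finset.mul_sum, secondMomentMatrix, of_apply]
        refine Finset.sum_congr rfl fun j _ => ?_
        rw [integral_const_mul]
        ring
    _ = ∫ x in s, ∑ i, ∑ j, u i * u j * ((x i - c i) * (x j - c j)) ∂μ := by
        rw [integral_finsetSum _ fun i _ => integrable_finsetSum _ fun j _ => hint i j]
        exact Finset.sum_congr rfl fun i _ => (integral_finsetSum _ fun j _ => hint i j).symm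
    _ = ∫ x in s, (u ⬝ᵥ (x - c)) ^ 2 ∂μ := by
        congr with x
        simp only [sq, dotProduct, Finset.sum_mul_sum, Pi.sub_apply]
        exact Finset.sum_congr rfl fun i _ => Finset.sum_congr rfl fun j _ => by ring

theorem posDef_secondMomentMatrix (μ : Measure (ι → ℝ)) [μ.IsAddHaarMeasure]
    {s : Set (ι → ℝ)} (hs : IsCompact s) (hμs : 0 < μ s) (c : ι → ℝ) :
    (secondMomentMatrix μ s c).PosDef := by
  refine .of_dotProduct_mulVec_pos ?_ fun u hu => ?_
  · ext i j
    simp only [conjTranspose_apply, star_trivial, secondMomentMatrix, of_apply, mul_comm]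
  · rw [star_trivial, dotProduct_secondMomentMatrix_mulVec μ hs]
    exact setIntegral_sq_pos ((by fun_prop : Continuous _).continuousOn.integrableOn_compact hs)
      (measure_dotProduct_sub_eq_zero μ hu c) hμs

end SecondMoment

theorem AffineIndependent.measure_convexHull_range_pos {E ι : Type*} [NormedAddCommGroup E]
    [NormedSpace ℝ E] [FiniteDimensional ℝ E] [MeasurableSpace E] [BorelSpace E]
    (μ : Measure E) [μ.IsAddHaarMeasure] [Fintype ι] {p : ι → E} (hp : AffineIndependent ℝ p)
    (hcard : Fintype.card ι = Module.finrank ℝ E + 1) :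
    0 < μ (convexHull ℝ (Set.range p)) :=
  μ.measure_pos_of_nonempty_interior <| interior_convexHull_nonempty_iff_affineSpan_eq_top.mpr <|
    hp.affineSpan_eq_top_iff_card_eq_finrank_add_one.mpr hcard

theorem smoothing_system_matrix_nonsingular_triangle_general
    (v₁ v₂ v₃ : Fin 2 → ℝ) (hindep : AffineIndependent ℝ ![v₁, v₂, v₃])
    (T : Set (Fin 2 → ℝ)) (hT : T = convexHull ℝ {v₁, v₂, v₃})
    (A : ℝ) (hA : A = (volume T).toReal)
    (c : Fin 2 → ℝ)
    (Ixx Ixy Iyy : ℝ)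
    (hIxx : Ixx = ∫ x in T, (x 0 - c 0) ^ 2)
    (hIxy : Ixy = ∫ x in T, (x 0 - c 0) * (x 1 - c 1))
    (hIyy : Iyy = ∫ x in T, (x 1 - c 1) ^ 2)
    (W : Matrix (Fin 3) (Fin 3) ℝ)
    (hW : W = Matrix.of ![![A, 0, 0], ![A * c 0, Ixx, Ixy], ![A * c 1, Ixy, Iyy]]) :
    W.det = A * (Ixx * Iyy - Ixy ^ 2) ∧ 0 < W.det ∧ IsUnit W ∧
      ∀ f : Fin 3 → ℝ, ∃! d : Fin 3 → ℝ, W.mulVec d = f := by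
  have hT_compact : IsCompact T := hT ▸ (Set.toFinite _).isCompact_convexHull ℝ
  have hT_pos : 0 < volume T := by
    have hrange : Set.range ![v₁, v₂, v₃] = {v₁, v₂, v₃} := by
      simp only [range_cons, range_empty, Set.union_empty, Set.singleton_union]
    rw [hT, ← hrange]
    exact hindep.measure_convexHull_range_pos volume (by simp)
  have hA_pos : 0 < A := by
    rw [hA]
    exact ENNReal.toReal_pos hT_pos.ne' hT_compact.measure_lt_top.ne
  have hM_det : (secondMomentMatrix volume T c).det = Ixx * Iyy - Ixy ^ 2 := by
    rw [det_fin_two, hIxx, hIxy, hIyy]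
    simp only [secondMomentMatrix, of_apply, mul_comm (_ - c 1), sq]
  have hM_det_pos := (posDef_secondMomentMatrix volume hT_compact hT_pos c).det_pos
  have hW_det : W.det = A * (Ixx * Iyy - Ixy ^ 2) := by
    rw [hW, det_fin_three]
    simp only [of_apply, cons_val', cons_val_zero, cons_val_fin_one, cons_val_one, cons_val,
      zero_mul, sub_zero, add_zero]
    ring
  have hW_det_pos : 0 < W.det := by
    rw [hW_det, ← hM_det]
    exact mul_pos hA_pos hM_det_pos
  have hW_unit : IsUnit W := (isUnit_iff_isUnit_det W).mpr hW_det_pos.ne'.isUnit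
  have hW_bij : Function.Bijective W.mulVec :=
    ⟨mulVec_injective_iff_isUnit.mpr hW_unit, mulVec_surjective_iff_isUnit.mpr hW_unit⟩
  exact ⟨hW_det, hW_det_pos, hW_unit, hW_bij.existsUnique⟩

/-- For a nondegenerate triangle `T = conv{v₁,v₂,v₃} ⊂ ℝ²` with area `A`, centroid `c` and
second-order central moments `Ixx, Ixy, Iyy`, the matrix
`W = [[A,0,0],[A·c₁,Ixx,Ixy],[A·c₂,Ixy,Iyy]]` has `det W = A·(Ixx·Iyy − Ixy²) > 0`; in
particular `W` is invertible and `W·d = f` has a unique solution for every `f`. -/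
theorem smoothing_system_matrix_nonsingular_triangle
    (v₁ v₂ v₃ : Fin 2 → ℝ) (hindep : AffineIndependent ℝ ![v₁, v₂, v₃])
    (T : Set (Fin 2 → ℝ)) (hT : T = convexHull ℝ {v₁, v₂, v₃})
    (A : ℝ) (hA : A = (volume T).toReal)
    (c : Fin 2 → ℝ) (hc : c = A⁻¹ • ∫ x in T, x)
    (Ixx Ixy Iyy : ℝ)
    (hIxx : Ixx = ∫ x in T, (x 0 - c 0) ^ 2)
    (hIxy : Ixy = ∫ x in T, (x 0 - c 0) * (x 1 - c 1))
    (hIyy : Iyy = ∫ x in T, (x 1 - c 1) ^ 2)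
    (W : Matrix (Fin 3) (Fin 3) ℝ)
    (hW : W = Matrix.of ![![A, 0, 0], ![A * c 0, Ixx, Ixy], ![A * c 1, Ixy, Iyy]]) :
    W.det = A * (Ixx * Iyy - Ixy ^ 2) ∧ 0 < W.det ∧ IsUnit W ∧
      ∀ f : Fin 3 → ℝ, ∃! d : Fin 3 → ℝ, W.mulVec d = f :=
  smoothing_system_matrix_nonsingular_triangle_general v₁ v₂ v₃ hindep T hT A hA c Ixx Ixy Iyy hIxx
    hIxy hIyy W hW
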